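/- Let A be an n×n matrix with entries in {0,1}, let δ ≥ 0, and suppose there exist vectors u, v ∈ ℝⁿ with ‖A − uvᵀ‖_F² ≤ δn². Then there exist Boolean vectors x, y ∈ {0,1}ⁿ such that ‖A − xyᵀ‖_F² = O(δ^{1/3} n²). -/
import Mathlib

open Finset

set_option maxHeartbeats 1000000

private lemma bool_sq_le_one' {a b c : ℝ} (ha : a = 0 ∨ a = 1) (hb : b = 0 ∨ b = 1)
    (hc : c = 0 ∨ c = 1) : (a - b * c) ^ 2 ≤ 1 := by
  rcases ha with h | h <;> rcases hb with h' | h' <;> rcases hc with h'' | h'' <;>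
    rw [h, h', h''] <;> norm_num

private lemma aux_main (n : ℕ) (A : Matrix (Fin n) (Fin n) ℝ)
    (hA : ∀ i j, A i j = 0 ∨ A i j = 1) (δ : ℝ) (hδ : 0 ≤ δ) (hδ1 : δ ≤ 1)
    (u v : Fin n → ℝ) (hu : ∀ i, 0 ≤ u i) (hv : ∀ j, 0 ≤ v j)
    (h : (∑ i, ∑ j, (A i j - u i * v j) ^ 2) ≤ δ * (n : ℝ) ^ 2) :
    ∃ x y : Fin n → ℝ, (∀ i, x i = 0 ∨ x i = 1) ∧ (∀ i, y i = 0 ∨ y i = 1) ∧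
      (∑ i, ∑ j, (A i j - x i * y j) ^ 2) ≤ 80 * Real.sqrt δ * (n : ℝ) ^ 2 := by
  classical
  have hA0 : ∀ i j, (0:ℝ) ≤ A i j ∧ A i j ≤ 1 := by
    intro i j; rcases hA i j with h' | h' <;> rw [h'] <;> norm_num
  have hn2 : (0:ℝ) ≤ (n:ℝ) ^ 2 := by positivity
  have hsle : δ ≤ Real.sqrt δ := by
    nlinarith [Real.sq_sqrt hδ, Real.sqrt_le_one.2 hδ1, Real.sqrt_nonneg δ]
  have hsnn : 0 ≤ Real.sqrt δ := Real.sqrt_nonneg δ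
  set F : Fin n × Fin n → ℝ := fun p => (A p.1 p.2 - u p.1 * v p.2) ^ 2 with hF
  have hsum : ∑ p : Fin n × Fin n, F p ≤ δ * (n:ℝ) ^ 2 := by
    rw [← Finset.univ_product_univ, Finset.sum_product]; exact h
  set bad : Finset (Fin n × Fin n) :=
    univ.filter (fun p => 1/8 < |A p.1 p.2 - u p.1 * v p.2|) with hbad
  set G : Finset (Fin n × Fin n) :=
    univ.filter (fun p => A p.1 p.2 = 1 ∧ |A p.1 p.2 - u p.1 * v p.2| ≤ 1/8) with hGdef
  have hGmem : ∀ p ∈ G, 7/8 ≤ u p.1 * v p.2 ∧ u p.1 * v p.2 ≤ 9/8 ∧ 0 < u p.1 ∧ 0 < v p.2 := by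
    intro p hp
    rw [hGdef, mem_filter] at hp
    obtain ⟨-, h1, h2⟩ := hp
    rw [h1] at h2
    obtain ⟨h3, h4⟩ := abs_le.1 h2
    refine ⟨by linarith, by linarith, ?_, ?_⟩
    · nlinarith [hu p.1, hv p.2]
    · nlinarith [hu p.1, hv p.2]
  set B := bad.card with hBdef
  have hBcard : (B : ℝ) ≤ 64 * δ * (n:ℝ) ^ 2 := by
    have h1 : ∀ p ∈ bad, (1:ℝ)/64 ≤ F p := by
      intro p hp
      rw [hbad, mem_filter] at hp
      have h2 := hp.2
      have : F p = |A p.1 p.2 - u p.1 * v p.2| ^ 2 := by rw [hF]; rw [sq_abs]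
      rw [this]
      nlinarith [abs_nonneg (A p.1 p.2 - u p.1 * v p.2)]
    have h2 : (B : ℝ) * (1/64) ≤ ∑ p ∈ bad, F p := by
      have := Finset.card_nsmul_le_sum bad F (1/64) h1
      rwa [nsmul_eq_mul] at this
    have h3 : ∑ p ∈ bad, F p ≤ ∑ p : Fin n × Fin n, F p :=
      Finset.sum_le_sum_of_subset_of_nonneg (subset_univ _) (fun p _ _ => sq_nonneg _)
    linarith
  set m := Nat.sqrt (n ^ 2 * B) with hmdef
  have hmsq : ((m : ℝ)) ^ 2 ≤ (n:ℝ) ^ 2 * B := by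
    have := Nat.sqrt_le' (n ^ 2 * B)
    exact_mod_cast this
  have hmR : (m : ℝ) ≤ 8 * Real.sqrt δ * (n:ℝ) ^ 2 := by
    have h2 : (n:ℝ) ^ 2 * B ≤ (n:ℝ) ^ 2 * (64 * δ * (n:ℝ) ^ 2) :=
      mul_le_mul_of_nonneg_left hBcard hn2
    have h3 : ((m:ℝ)) ^ 2 ≤ (8 * (n:ℝ) ^ 2) ^ 2 * δ := by nlinarith
    calc (m : ℝ) = Real.sqrt ((m:ℝ) ^ 2) := (Real.sqrt_sq (Nat.cast_nonneg m)).symm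
      _ ≤ Real.sqrt ((8 * (n:ℝ) ^ 2) ^ 2 * δ) := Real.sqrt_le_sqrt h3
      _ = 8 * Real.sqrt δ * (n:ℝ) ^ 2 := by
          rw [Real.sqrt_mul (by positivity), Real.sqrt_sq (by positivity)]; ring
  have crossBad : ∀ c : ℝ, 0 < c →
      (G.filter (fun e => u e.1 < c)).card * (G.filter (fun e => 3/2 * c < u e.1)).card
        ≤ n ^ 2 * B := by
    intro c hc
    set cols : Finset (Fin n) := univ.filter (fun j => ∃ i, (i, j) ∈ G ∧ u i < c) with hcols
    set rows : Finset (Fin n) := univ.filter (fun i => (∃ j, (i, j) ∈ G) ∧ 3/2 * c < u i)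
      with hrows
    have h1 : G.filter (fun e => u e.1 < c) ⊆ univ ×ˢ cols := by
      intro e he
      rw [mem_filter] at he
      rw [mem_product]
      refine ⟨mem_univ _, ?_⟩
      rw [hcols, mem_filter]
      exact ⟨mem_univ _, e.1, by rw [Prod.mk.eta]; exact he.1, he.2⟩
    have h2 : G.filter (fun e => 3/2 * c < u e.1) ⊆ rows ×ˢ univ := by
      intro e he
      rw [mem_filter] at he
      rw [mem_product]
      refine ⟨?_, mem_univ _⟩
      rw [hrows, mem_filter]
      exact ⟨mem_univ _, ⟨e.2, by rw [Prod.mk.eta]; exact he.1⟩, he.2⟩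
    have h3 : rows ×ˢ cols ⊆ bad := by
      intro p hp
      rw [mem_product] at hp
      obtain ⟨hpr, hpc⟩ := hp
      rw [hrows, mem_filter] at hpr
      rw [hcols, mem_filter] at hpc
      obtain ⟨-, ⟨j', hj'⟩, hub⟩ := hpr
      obtain ⟨-, i', hi'G, hi'lt⟩ := hpc
      have hg := hGmem _ hi'G
      have hvpos : 0 < v p.2 := hg.2.2.2
      have h5 : 7/8 < c * v p.2 := by
        have := mul_lt_mul_of_pos_right hi'lt hvpos
        linarith [hg.1]
      have h6 : 21/16 < u p.1 * v p.2 := by nlinarith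
      rw [hbad, mem_filter]
      refine ⟨mem_univ _, ?_⟩
      have hA1 := (hA0 p.1 p.2).2
      have h7 : u p.1 * v p.2 - A p.1 p.2 ≤ |A p.1 p.2 - u p.1 * v p.2| := by
        rw [abs_sub_comm]; exact le_abs_self _
      linarith
    calc (G.filter (fun e => u e.1 < c)).card * (G.filter (fun e => 3/2 * c < u e.1)).card
        ≤ (univ ×ˢ cols).card * (rows ×ˢ univ).card :=
          Nat.mul_le_mul (card_le_card h1) (card_le_card h2)
      _ = (n * cols.card) * (rows.card * n) := by
          rw [card_product, card_product, card_univ, Fintype.card_fin]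
      _ = n ^ 2 * (rows.card * cols.card) := by ring
      _ ≤ n ^ 2 * B := by
          refine Nat.mul_le_mul_left _ ?_
          rw [hBdef, ← card_product]
          exact card_le_card h3
  by_cases hGm : G.card ≤ m
  · -- trivial rectangle x = y = 0
    refine ⟨fun _ => 0, fun _ => 0, fun i => Or.inl rfl, fun i => Or.inl rfl, ?_⟩
    have hle : ∀ p : Fin n × Fin n,
        (A p.1 p.2 - (0:ℝ) * 0) ^ 2 ≤ if p ∈ bad ∪ G then (1:ℝ) else 0 := by
      intro p
      rcases hA p.1 p.2 with h' | h'
      · rw [h']; split_ifs <;> norm_num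
      · have hmem : p ∈ bad ∪ G := by
          rw [mem_union]
          by_cases hb : 1/8 < |A p.1 p.2 - u p.1 * v p.2|
          · exact Or.inl (by rw [hbad, mem_filter]; exact ⟨mem_univ _, hb⟩)
          · exact Or.inr (by rw [hGdef, mem_filter]; exact ⟨mem_univ _, h', le_of_not_gt hb⟩)
        rw [h', if_pos hmem]; norm_num
    calc (∑ i, ∑ j, (A i j - (0:ℝ) * 0) ^ 2)
        = ∑ p : Fin n × Fin n, (A p.1 p.2 - (0:ℝ) * 0) ^ 2 := by
          rw [← Finset.univ_product_univ, Finset.sum_product]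
      _ ≤ ∑ p : Fin n × Fin n, (if p ∈ bad ∪ G then (1:ℝ) else 0) :=
          Finset.sum_le_sum (fun p _ => hle p)
      _ = ((bad ∪ G).card : ℝ) := by
          rw [Finset.sum_ite_mem, Finset.univ_inter, Finset.sum_const, nsmul_eq_mul, mul_one]
      _ ≤ (B : ℝ) + m := by
          have h1 : (bad ∪ G).card ≤ B + m := le_trans (card_union_le _ _) (by omega)
          exact_mod_cast h1
      _ ≤ 80 * Real.sqrt δ * (n:ℝ) ^ 2 := by
          nlinarith [mul_nonneg (sub_nonneg.2 hsle) hn2]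
  · push_neg at hGm
    have hGne : G.Nonempty := card_pos.1 (by omega)
    set img := G.image (fun e => u e.1) with himg
    have himgne : img.Nonempty := hGne.image _
    set a := img.min' himgne with ha
    have ha_le : ∀ e ∈ G, a ≤ u e.1 := fun e he => min'_le _ _ (mem_image_of_mem _ he)
    have hapos : 0 < a := by
      obtain ⟨e, heG, heq⟩ := Finset.mem_image.1 (img.min'_mem himgne)
      rw [ha, ← heq]
      exact (hGmem e heG).2.2.1
    obtain ⟨K, hK⟩ : ∃ K : ℕ, ∀ e ∈ G, u e.1 < 2 ^ K * a := by
      obtain ⟨K, hK⟩ := pow_unbounded_of_one_lt (img.max' himgne / a) (one_lt_two (α := ℝ))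
      refine ⟨K, fun e he => ?_⟩
      have hMe : u e.1 ≤ img.max' himgne :=
        le_max' img (u e.1) (by rw [himg]; exact mem_image_of_mem _ he)
      rw [div_lt_iff₀ hapos] at hK
      calc u e.1 ≤ img.max' himgne := hMe
        _ < 2 ^ K * a := by linarith
    have key : ∀ K' : ℕ, (G.filter (fun e => u e.1 < 2 ^ K' * a)).card ≤ m ∨
        ∃ t : ℝ, 0 < t ∧ (G.filter (fun e => u e.1 < t)).card ≤ m ∧
          m + 1 ≤ (G.filter (fun e => u e.1 < 2 * t)).card := by
      intro K'
      induction K' with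
      | zero =>
        left
        have he : G.filter (fun e => u e.1 < 2 ^ 0 * a) = ∅ :=
          filter_eq_empty_iff.2 (fun e he => by
            simp only [pow_zero, one_mul]; exact not_lt.2 (ha_le e he))
        rw [he]; simp
      | succ K'' ih =>
        rcases ih with hK' | hfound
        · by_cases h2 : (G.filter (fun e => u e.1 < 2 ^ (K'' + 1) * a)).card ≤ m
          · exact Or.inl h2
          · refine Or.inr ⟨2 ^ K'' * a, by positivity, hK', ?_⟩
            have heq : G.filter (fun e => u e.1 < 2 * (2 ^ K'' * a))
                = G.filter (fun e => u e.1 < 2 ^ (K'' + 1) * a) := by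
              apply filter_congr
              intro e _
              rw [show (2:ℝ) * (2 ^ K'' * a) = 2 ^ (K'' + 1) * a by ring]
            rw [heq]; omega
        · exact Or.inr hfound
    obtain ⟨t, ht, hLt, hL2t⟩ : ∃ t : ℝ, 0 < t ∧ (G.filter (fun e => u e.1 < t)).card ≤ m ∧
        m + 1 ≤ (G.filter (fun e => u e.1 < 2 * t)).card := by
      rcases key K with hbadK | hok
      · exfalso
        have : G.filter (fun e => u e.1 < 2 ^ K * a) = G := filter_eq_self.2 hK
        rw [this] at hbadK
        omega
      · exact hok
    have hH3t : (G.filter (fun e => 3 * t < u e.1)).card ≤ m := by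
      have hcb := crossBad (2 * t) (by positivity)
      have heq : G.filter (fun e => 3/2 * (2 * t) < u e.1)
          = G.filter (fun e => 3 * t < u e.1) := by
        apply filter_congr
        intro e _
        rw [show (3:ℝ)/2 * (2 * t) = 3 * t by ring]
      rw [heq] at hcb
      have hsq : n ^ 2 * B < (m + 1) * (m + 1) := by
        simpa [hmdef, Nat.succ_eq_add_one] using Nat.lt_succ_sqrt (n ^ 2 * B)
      by_contra hcon
      push_neg at hcon
      have h1 : (m + 1) * (m + 1) ≤
          (G.filter (fun e => u e.1 < 2 * t)).card * (G.filter (fun e => 3 * t < u e.1)).card :=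
        Nat.mul_le_mul hL2t hcon
      exact Nat.lt_irrefl _ (Nat.lt_of_le_of_lt (Nat.le_trans h1 hcb) hsq)
    refine ⟨fun i => if t ≤ u i then 1 else 0, fun j => if 1/(4*t) ≤ v j then 1 else 0,
      fun i => by
        by_cases h' : t ≤ u i
        · exact Or.inr (if_pos h')
        · exact Or.inl (if_neg h'),
      fun j => by
        by_cases h' : 1/(4*t) ≤ v j
        · exact Or.inr (if_pos h')
        · exact Or.inl (if_neg h'), ?_⟩
    set E := bad ∪ G.filter (fun e => u e.1 < t) ∪ G.filter (fun e => 3 * t < u e.1) with hE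
    have hterm : ∀ p : Fin n × Fin n,
        (A p.1 p.2 - (if t ≤ u p.1 then (1:ℝ) else 0) * (if 1/(4*t) ≤ v p.2 then (1:ℝ) else 0)) ^ 2
          ≤ if p ∈ E then (1:ℝ) else 0 := by
      intro p
      by_cases hpE : p ∈ E
      · rw [if_pos hpE]
        refine bool_sq_le_one' (hA p.1 p.2) ?_ ?_ <;> split_ifs <;> simp
      · rw [if_neg hpE]
        have hnb : ¬ (1/8 < |A p.1 p.2 - u p.1 * v p.2|) := by
          intro hb
          exact hpE (mem_union_left _ (mem_union_left _
            (by rw [hbad, mem_filter]; exact ⟨mem_univ _, hb⟩)))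
        have habs : |A p.1 p.2 - u p.1 * v p.2| ≤ 1/8 := le_of_not_gt hnb
        rcases hA p.1 p.2 with h0 | h1
        · have huv : u p.1 * v p.2 ≤ 1/8 := by
            rw [h0] at habs
            have := (abs_le.1 habs).1
            linarith
          have hx0 : ¬ (t ≤ u p.1) ∨ ¬ (1/(4*t) ≤ v p.2) := by
            by_contra hcc
            push_neg at hcc
            have h4t : (0:ℝ) < 1/(4*t) := by positivity
            have : (1:ℝ)/4 ≤ u p.1 * v p.2 := by
              calc (1:ℝ)/4 = t * (1/(4*t)) := by field_simp
                _ ≤ u p.1 * v p.2 :=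
                    mul_le_mul hcc.1 hcc.2 (le_of_lt h4t) ((le_of_lt ht).trans hcc.1)
            linarith
          rcases hx0 with hx | hy
          · rw [h0, if_neg hx]; norm_num
          · rw [h0, if_neg hy]; norm_num
        · have hpG : p ∈ G := by rw [hGdef, mem_filter]; exact ⟨mem_univ _, h1, habs⟩
          have hnl : ¬ (u p.1 < t) := by
            intro hl
            exact hpE (mem_union_left _ (mem_union_right _ (mem_filter.2 ⟨hpG, hl⟩)))
          have hnh : ¬ (3 * t < u p.1) := by
            intro hh
            exact hpE (mem_union_right _ (mem_filter.2 ⟨hpG, hh⟩))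
          push_neg at hnl hnh
          have hg := hGmem p hpG
          have hvb : 1/(4*t) ≤ v p.2 := by
            rw [div_le_iff₀ (by positivity)]
            nlinarith [hg.1, hg.2.2.2]
          rw [h1, if_pos hnl, if_pos hvb]
          norm_num
    calc (∑ i, ∑ j, (A i j - (if t ≤ u i then (1:ℝ) else 0) *
            (if 1/(4*t) ≤ v j then (1:ℝ) else 0)) ^ 2)
        = ∑ p : Fin n × Fin n, (A p.1 p.2 - (if t ≤ u p.1 then (1:ℝ) else 0) *
            (if 1/(4*t) ≤ v p.2 then (1:ℝ) else 0)) ^ 2 := by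
          rw [← Finset.univ_product_univ, Finset.sum_product]
      _ ≤ ∑ p : Fin n × Fin n, (if p ∈ E then (1:ℝ) else 0) :=
          Finset.sum_le_sum (fun p _ => hterm p)
      _ = (E.card : ℝ) := by
          rw [Finset.sum_ite_mem, Finset.univ_inter, Finset.sum_const, nsmul_eq_mul, mul_one]
      _ ≤ (B : ℝ) + m + m := by
          have h1 : E.card ≤ B + m + m := by
            refine le_trans (card_union_le _ _) ?_
            have h2 := card_union_le bad (G.filter (fun e => u e.1 < t))
            omega
          push_cast
          exact_mod_cast h1
      _ ≤ 80 * Real.sqrt δ * (n:ℝ) ^ 2 := by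
          nlinarith [mul_nonneg (sub_nonneg.2 hsle) hn2]

theorem boolean_rank_one_approximation :
    ∃ C : ℝ, 0 < C ∧ ∀ (n : ℕ) (A : Matrix (Fin n) (Fin n) ℝ),
      (∀ i j, A i j = 0 ∨ A i j = 1) →
      ∀ (δ : ℝ), 0 ≤ δ →
      ∀ u v : Fin n → ℝ,
        (∑ i, ∑ j, (A i j - u i * v j) ^ 2) ≤ δ * (n : ℝ) ^ 2 →
        ∃ x y : Fin n → ℝ, (∀ i, x i = 0 ∨ x i = 1) ∧ (∀ i, y i = 0 ∨ y i = 1) ∧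
          (∑ i, ∑ j, (A i j - x i * y j) ^ 2) ≤ C * δ ^ ((1 : ℝ) / 3) * (n : ℝ) ^ 2 := by
  refine ⟨80, by norm_num, ?_⟩
  intro n A hA δ hδ u v h
  by_cases hδ1 : δ ≤ 1
  · -- use the auxiliary lemma with |u|, |v|
    have h' : (∑ i, ∑ j, (A i j - |u i| * |v j|) ^ 2) ≤ δ * (n : ℝ) ^ 2 := by
      refine le_trans (Finset.sum_le_sum fun i _ => Finset.sum_le_sum fun j _ => ?_) h
      have hA0 : 0 ≤ A i j := by rcases hA i j with h' | h' <;> rw [h'] <;> norm_num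
      have h1 : abs (A i j - abs (u i * v j)) ≤ |A i j - u i * v j| := by
        have := abs_abs_sub_abs_le_abs_sub (A i j) (u i * v j)
        rwa [abs_of_nonneg hA0] at this
      calc (A i j - |u i| * |v j|) ^ 2 = (abs (A i j - abs (u i * v j))) ^ 2 := by
            rw [sq_abs, abs_mul]
        _ ≤ |A i j - u i * v j| ^ 2 := by
            have h2 : 0 ≤ abs (A i j - abs (u i * v j)) := abs_nonneg _
            nlinarith
        _ = (A i j - u i * v j) ^ 2 := sq_abs _
    obtain ⟨x, y, hx, hy, hxy⟩ := aux_main n A hA δ hδ hδ1 (fun i => |u i|) (fun j => |v j|)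
      (fun i => abs_nonneg _) (fun j => abs_nonneg _) h'
    refine ⟨x, y, hx, hy, le_trans hxy ?_⟩
    have hsr : Real.sqrt δ ≤ δ ^ ((1:ℝ)/3) := by
      rcases eq_or_lt_of_le hδ with h0 | h0
      · rw [← h0, Real.sqrt_zero, Real.zero_rpow (by norm_num)]
      · rw [Real.sqrt_eq_rpow]
        exact Real.rpow_le_rpow_of_exponent_ge h0 hδ1 (by norm_num)
    have hn2 : (0:ℝ) ≤ (n:ℝ) ^ 2 := by positivity
    nlinarith
  · -- δ > 1 : take x = y = 0
    push_neg at hδ1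
    refine ⟨fun _ => 0, fun _ => 0, fun i => Or.inl rfl, fun i => Or.inl rfl, ?_⟩
    have hone : (1:ℝ) ≤ δ ^ ((1:ℝ)/3) :=
      Real.one_le_rpow hδ1.le (by norm_num)
    have hbound : ∀ i j, (A i j - (0:ℝ) * 0) ^ 2 ≤ 1 := by
      intro i j; rcases hA i j with h' | h' <;> rw [h'] <;> norm_num
    calc (∑ i, ∑ j, (A i j - (0:ℝ) * 0) ^ 2)
        ≤ ∑ _i : Fin n, ∑ _j : Fin n, (1:ℝ) :=
          Finset.sum_le_sum fun i _ => Finset.sum_le_sum fun j _ => hbound i j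
      _ = (n : ℝ) ^ 2 := by simp [sq]
      _ ≤ 80 * δ ^ ((1:ℝ)/3) * (n:ℝ) ^ 2 := by nlinarith [sq_nonneg (n:ℝ)]
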